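/- Let E be a complex Banach space and let T : E → E be a bounded linear operator. If T is uniformly almost periodic, i.e., there exists a periodic bounded linear operator S on E with ‖T^n − S^n‖ → 0, then T is uniformly mean ergodic: the Cesàro averages A_n[T] = (1/n) ∑_{k=0}^{n−1} T^k converge in operator norm to a bounded projection P : E → E (P^2 = P) whose range equals the fixed space fix(T) = {x ∈ E : Tx = x}. -/

import Mathlib

/-!
The sequence `k ↦ S ^ (k + N)` is `N`-periodic, so its Cesàro means converge to its average `P`
over one period. The powers of `T` differ from it by a null sequence, whose Cesàro means are null
too, so the Cesàro means `Aₙ` of `T` converge to `P` in norm. The powers of `T` are bounded, hence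
`(T - 1) Aₙ = (Tⁿ - 1) / n → 0` gives `T P = P`; then `Aₙ P = P` yields `P² = P`, and `Aₙ x = x`
for every fixed point `x` of `T` yields `P x = x`.
-/

open Filter

/-- A bounded operator `S` is periodic if `S ^ (n + N) = S ^ n` for some `N ≥ 1` and all
`n ≥ 1`. -/
def OperatorPeriodic {E : Type*} [NormedAddCommGroup E] [NormedSpace ℂ E]
    (S : E →L[ℂ] E) : Prop :=
  ∃ N ≥ 1, ∀ n ≥ 1, S ^ (n + N) = S ^ n

open Finset Topology Function

theorem inv_natCast_smul_sum_range_const {𝕜 E : Type*} [DivisionRing 𝕜] [CharZero 𝕜]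
    [AddCommGroup E] [Module 𝕜 E] {n : ℕ} (hn : n ≠ 0) (v : E) :
    (n : 𝕜)⁻¹ • ∑ _k ∈ range n, v = v := by
  rw [sum_const, card_range, ← Nat.cast_smul_eq_nsmul 𝕜,
    inv_smul_smul₀ (Nat.cast_ne_zero.2 hn : (n : 𝕜) ≠ 0)]

section Cesaro

variable {𝕜 E : Type*} [RCLike 𝕜] [NormedAddCommGroup E] [NormedSpace 𝕜 E]

theorem Filter.Tendsto.rclike_cesaro_smul {u : ℕ → E} {l : E} (h : Tendsto u atTop (𝓝 l)) :
    Tendsto (fun n : ℕ => (n : 𝕜)⁻¹ • ∑ k ∈ range n, u k) atTop (𝓝 l) := by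
  let := NormedSpace.restrictScalars ℝ 𝕜 E
  simpa only [inv_natCast_smul_eq 𝕜 ℝ] using h.cesaro_smul

theorem Function.Periodic.isBoundedUnder_norm {u : ℕ → E} {N : ℕ} (hu : Periodic u N)
    (hN : 0 < N) : IsBoundedUnder (· ≤ ·) atTop (‖u ·‖) := by
  refine isBoundedUnder_of ⟨∑ k ∈ range N, ‖u k‖, fun n => ?_⟩
  rw [← hu.map_mod_nat n]
  exact single_le_sum (f := (‖u ·‖)) (fun _ _ => norm_nonneg _) (mem_range.2 (n.mod_lt hN))

theorem Function.Periodic.tendsto_cesaro_smul {u : ℕ → E} {N : ℕ} (hu : Periodic u N)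
    (hN : 0 < N) :
    Tendsto (fun n : ℕ => (n : 𝕜)⁻¹ • ∑ k ∈ range n, u k) atTop
      (𝓝 ((N : 𝕜)⁻¹ • ∑ k ∈ range N, u k)) := by
  set c := (N : 𝕜)⁻¹ • ∑ k ∈ range N, u k
  -- The partial sums of the centred sequence `u - c` vanish at `N`, hence are `N`-periodic.
  set s : ℕ → E := fun n => ∑ k ∈ range n, (u k - c)
  have hsN : s N = 0 := by
    show ∑ k ∈ range N, (u k - c) = 0
    rw [sum_sub_distrib, sum_const, card_range, ← Nat.cast_smul_eq_nsmul 𝕜,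
      smul_inv_smul₀ (Nat.cast_ne_zero.2 hN.ne' : (N : 𝕜) ≠ 0), sub_self]
  have hs : Periodic s N := fun n => calc
    s (n + N) = s N + ∑ k ∈ range n, (u (N + k) - c) := by
      rw [add_comm]; exact sum_range_add _ _ _
    _ = s n := by rw [hsN, zero_add]; exact sum_congr rfl fun k _ => by rw [add_comm, hu k]
  have hlim := (tendsto_inv_atTop_nhds_zero_nat (𝕜 := 𝕜)).zero_smul_isBoundedUnder_le
    (hs.isBoundedUnder_norm hN)
  rw [← add_zero c]
  refine (tendsto_const_nhds.add hlim).congr' ?_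
  filter_upwards [eventually_ne_atTop 0] with n hn
  simp only [s, sum_sub_distrib, smul_sub, inv_natCast_smul_sum_range_const hn]
  abel

end Cesaro

section NormedAlgebra

variable {𝕜 A : Type*} [RCLike 𝕜] [NormedRing A] [NormedAlgebra 𝕜 A] {a p : A}

theorem mul_eq_right_of_tendsto_cesaro_pow
    (hp : Tendsto (fun n : ℕ => (n : 𝕜)⁻¹ • ∑ k ∈ range n, a ^ k) atTop (𝓝 p))
    (ha : IsBoundedUnder (· ≤ ·) atTop (‖a ^ ·‖)) : a * p = p := by
  have hinv := tendsto_inv_atTop_nhds_zero_nat (𝕜 := 𝕜)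
  have hker :
      Tendsto (fun n : ℕ => (a - 1) * ((n : 𝕜)⁻¹ • ∑ k ∈ range n, a ^ k)) atTop (𝓝 0) := by
    simp only [mul_smul_comm, mul_geom_sum, smul_sub]
    simpa using (hinv.zero_smul_isBoundedUnder_le ha).sub (hinv.smul_const (1 : A))
  have := tendsto_nhds_unique (hp.const_mul (a - 1)) hker
  rwa [sub_mul, one_mul, sub_eq_zero] at this

theorem isIdempotentElem_of_tendsto_cesaro_pow
    (hp : Tendsto (fun n : ℕ => (n : 𝕜)⁻¹ • ∑ k ∈ range n, a ^ k) atTop (𝓝 p))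
    (hap : a * p = p) : IsIdempotentElem p := by
  have hpow : ∀ k : ℕ, a ^ k * p = p := fun k => by
    induction k with
    | zero => rw [pow_zero, one_mul]
    | succ k ih => rw [pow_succ, mul_assoc, hap, ih]
  refine tendsto_nhds_unique (hp.mul_const p) (tendsto_const_nhds.congr' ?_)
  filter_upwards [eventually_ne_atTop 0] with n hn
  simp only [smul_mul_assoc, sum_mul, hpow, inv_natCast_smul_sum_range_const hn]

end NormedAlgebra

theorem ContinuousLinearMap.range_eq_fixedPoints_of_tendsto_cesaro_pow {𝕜 E : Type*} [RCLike 𝕜]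
    [NormedAddCommGroup E] [NormedSpace 𝕜 E] {T P : E →L[𝕜] E}
    (hP : Tendsto (fun n : ℕ => (n : 𝕜)⁻¹ • ∑ k ∈ range n, T ^ k) atTop (𝓝 P))
    (hTP : T * P = P) : Set.range P = fixedPoints T := by
  ext x
  constructor
  · rintro ⟨y, rfl⟩
    exact DFunLike.congr_fun hTP y
  · intro hx
    have hpow : ∀ k : ℕ, (T ^ k) x = x := fun k => by
      rw [FunLike.coe_pow_eq_iterate]
      exact Function.IsFixedPt.iterate hx k
    refine ⟨x, tendsto_nhds_unique (((apply 𝕜 E x).continuous.tendsto P).comp hP)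
      (tendsto_const_nhds.congr' ?_)⟩
    filter_upwards [eventually_ne_atTop 0] with n hn
    simp only [Function.comp_apply, apply_apply, _root_.smul_apply, _root_.sum_apply, hpow,
      inv_natCast_smul_sum_range_const hn]

theorem uniformlyMeanErgodic_of_uniformlyAlmostPeriodic_general
    {E : Type*} [NormedAddCommGroup E] [NormedSpace ℂ E]
    (T : E →L[ℂ] E)
    (hT : ∃ S : E →L[ℂ] E, OperatorPeriodic S ∧
      Tendsto (fun n : ℕ => ‖T ^ n - S ^ n‖) atTop (nhds 0)) :
    ∃ P : E →L[ℂ] E,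
      Tendsto (fun n : ℕ => ‖(n : ℂ)⁻¹ • (∑ k ∈ Finset.range n, T ^ k) - P‖) atTop (nhds 0) ∧
      P.comp P = P ∧
      Set.range P = {x : E | T x = x} := by
  obtain ⟨S, ⟨N, hN, hper⟩, hTS⟩ := hT
  set u : ℕ → E →L[ℂ] E := fun k => S ^ (k + N)
  have hu : Periodic u N := fun k => hper (k + N) (by omega)
  have hTu : Tendsto (fun n => T ^ n - u n) atTop (𝓝 0) := by
    refine (tendsto_zero_iff_norm_tendsto_zero.2 hTS).congr' ?_
    filter_upwards [eventually_ge_atTop 1] with n hn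
    simp only [u, hper n hn]
  set P := (N : ℂ)⁻¹ • ∑ k ∈ range N, u k
  have hmean : Tendsto (fun n : ℕ => (n : ℂ)⁻¹ • ∑ k ∈ range n, T ^ k) atTop (𝓝 P) := by
    have h := (hTu.rclike_cesaro_smul (𝕜 := ℂ)).add (hu.tendsto_cesaro_smul (𝕜 := ℂ) hN)
    rw [zero_add] at h
    refine h.congr fun n => ?_
    simp only [← smul_add, ← sum_add_distrib, sub_add_cancel]
  have hbdd : IsBoundedUnder (· ≤ ·) atTop (‖T ^ ·‖) :=
    (isBoundedUnder_le_add hTu.norm.isBoundedUnder_le (hu.isBoundedUnder_norm hN)).mono_le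
      (Eventually.of_forall fun n => by simpa using norm_add_le (T ^ n - u n) (u n))
  have hTP := mul_eq_right_of_tendsto_cesaro_pow hmean hbdd
  exact ⟨P, tendsto_iff_norm_sub_tendsto_zero.1 hmean,
    isIdempotentElem_of_tendsto_cesaro_pow hmean hTP,
    ContinuousLinearMap.range_eq_fixedPoints_of_tendsto_cesaro_pow hmean hTP⟩

/-- If a bounded operator `T` on a complex Banach space is uniformly almost periodic, then it
is uniformly mean ergodic: the Cesàro averages converge in operator norm to a bounded
projection `P` whose range is the fixed space of `T`. -/
theorem uniformlyMeanErgodic_of_uniformlyAlmostPeriodic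
    {E : Type*} [NormedAddCommGroup E] [NormedSpace ℂ E] [CompleteSpace E]
    (T : E →L[ℂ] E)
    (hT : ∃ S : E →L[ℂ] E, OperatorPeriodic S ∧
      Tendsto (fun n : ℕ => ‖T ^ n - S ^ n‖) atTop (nhds 0)) :
    ∃ P : E →L[ℂ] E,
      Tendsto (fun n : ℕ => ‖(n : ℂ)⁻¹ • (∑ k ∈ Finset.range n, T ^ k) - P‖) atTop (nhds 0) ∧
      P.comp P = P ∧
      Set.range P = {x : E | T x = x} :=
  uniformlyMeanErgodic_of_uniformlyAlmostPeriodic_general T hT
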